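/- Neither the semisimple part X1s nor the nilpotent part X1n of X1 belongs to h; that is, X1s ∉ span_ℂ{X1, X2, X3} and X1n ∉ span_ℂ{X1, X2, X3}. (Consequently h is not closed under Chevalley–Jordan decomposition, which is the paper's proof that h is not an algebraic Lie algebra.) -/
import Mathlib


open Matrix

noncomputable section

def X1 (α β : ℂ) : Matrix (Fin 4) (Fin 4) ℂ :=
  !![1,1,0,1; 1,1,0,0; α,β,0,0; 0,0,0,0]

def X2 (α β : ℂ) : Matrix (Fin 4) (Fin 4) ℂ :=
  !![1,1,0,0; 1,1,0,1; β-1,α+1,0,0; 0,0,0,0]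

def X3 : Matrix (Fin 4) (Fin 4) ℂ :=
  !![0,0,0,0; 0,0,0,0; 0,0,0,1; 0,0,0,0]

/-- The ℂ-linear span of {X1, X2, X3}. -/
def h (α β : ℂ) : Submodule ℂ (Matrix (Fin 4) (Fin 4) ℂ) :=
  Submodule.span ℂ {X1 α β, X2 α β, X3}
def X1s (α β : ℂ) : Matrix (Fin 4) (Fin 4) ℂ :=
  !![1,1,0,1/2; 1,1,0,1/2; (α+β)/2,(α+β)/2,0,(α+β)/4; 0,0,0,0]

def X1n (α β : ℂ) : Matrix (Fin 4) (Fin 4) ℂ := X1 α β - X1s α β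

/-- A linear functional vanishing on the generators of h. -/
def φ (α β : ℂ) : Matrix (Fin 4) (Fin 4) ℂ →ₗ[ℂ] ℂ where
  toFun M := M 2 0 - α * M 0 3 - (β - 1) * M 1 3
  map_add' M N := by simp [Matrix.add_apply]; ring
  map_smul' c M := by simp [Matrix.smul_apply]; ring

lemma h_le_ker (α β : ℂ) : h α β ≤ LinearMap.ker (φ α β) := by
  rw [h, Submodule.span_le]
  intro M hM
  simp only [Set.mem_insert_iff, Set.mem_singleton_iff] at hM
  rcases hM with rfl | rfl | rfl <;>
    simp [φ, X1, X2, X3, LinearMap.mem_ker, Matrix.vecHead, Matrix.vecTail] <;> ring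

/-- Neither the semisimple part X1s nor the nilpotent part X1n of X1 belongs to h. -/
theorem jordan_parts_not_in_h (α β : ℂ) (hαβ : α + β ≠ 0) :
    X1s α β ∉ h α β ∧ X1n α β ∉ h α β := by
  constructor
  · intro hm
    have := h_le_ker α β hm
    rw [LinearMap.mem_ker] at this
    simp [φ, X1s] at this
    apply (two_ne_zero (α := ℂ)) ?_
    linear_combination 4 * this
  · intro hm
    have := h_le_ker α β hm
    rw [LinearMap.mem_ker] at this
    simp [φ, X1n, X1, X1s] at this
    apply (two_ne_zero (α := ℂ)) ?_
    linear_combination (-4) * this
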